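/- arXiv:1910.13564 — 2 statements merged into one kernel-verified Lean document; each statement's English description precedes it below -/
import Mathlib

section
/- Let E be a real normed vector space, let r ≥ 1 be an integer, and let L : E^r → ℝ be a continuous r-multilinear map which is symmetric, i.e. L(ξ_{σ(1)},…,ξ_{σ(r)}) = L(ξ_1,…,ξ_r) for every permutation σ of {1,…,r}. Then sup{ |L(ξ,…,ξ)| : ‖ξ‖ ≤ 1 } ≤ sup{ |L(ξ_1,…,ξ_r)| : ‖ξ_1‖ ≤ 1, …, ‖ξ_r‖ ≤ 1 } ≤ (r^r / r!) · sup{ |L(ξ,…,ξ)| : ‖ξ‖ ≤ 1 }. -/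
open Finset

noncomputable def sgn16 : Bool → ℝ := fun b => if b then 1 else -1

lemma abs_sgn16 (b : Bool) : |sgn16 b| = 1 := by cases b <;> simp [sgn16]

lemma sum_sgn16_pow (k : ℕ) :
    ∑ b : Bool, sgn16 b ^ (k + 1) = if Odd k then 2 else 0 := by
  rcases Nat.even_or_odd k with h | h
  · have h1 : Odd (k + 1) := h.add_one
    rw [Fintype.sum_bool]
    simp [sgn16, h1.neg_one_pow, Nat.not_odd_iff_even.mpr h]
  · have h1 : Even (k + 1) := h.add_one
    rw [Fintype.sum_bool]
    simp [sgn16, h1.neg_one_pow, h]; norm_num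

lemma coeff16 {r : ℕ} (f : Fin r → Fin r) :
    (∏ j, ∑ b : Bool, sgn16 b ^ ((univ.filter fun i => f i = j).card + 1))
      = if Function.Bijective f then (2:ℝ)^r else 0 := by
  classical
  set m : Fin r → ℕ := fun j => (univ.filter fun i => f i = j).card with hm
  have hsum : ∑ j, m j = r := by
    rw [hm]
    rw [← Finset.card_eq_sum_card_fiberwise (f := f) (t := univ) (fun i _ => mem_univ _)]
    simp
  by_cases hf : Function.Bijective f
  · have h1 : ∀ j, m j = 1 := by
      intro j
      have : (univ.filter fun i => f i = j) = {(Equiv.ofBijective f hf).symm j} := by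
        ext i
        simp only [mem_filter, mem_univ, true_and, mem_singleton]
        constructor
        · intro h; exact (Equiv.ofBijective f hf).injective (by simpa using h)
        · intro h; subst h; exact (Equiv.ofBijective f hf).apply_symm_apply j
      rw [hm]; simp [this]
    rw [if_pos hf]
    calc (∏ j, ∑ b : Bool, sgn16 b ^ (m j + 1))
        = ∏ _j : Fin r, (2:ℝ) := by
          refine Finset.prod_congr rfl fun j _ => ?_
          rw [sum_sgn16_pow, h1 j, if_pos (by norm_num)]
      _ = 2 ^ r := by simp
  · have hodd : ¬ ∀ j, Odd (m j) := by
      intro hall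
      apply hf
      have hall1 : ∀ j, m j = 1 := by
        have hle : ∀ j ∈ univ, 1 ≤ m j := fun j _ => (hall j).pos
        have := (Finset.sum_eq_sum_iff_of_le hle).mp ?_
        · intro j; exact (this j (mem_univ j)).symm
        · rw [hsum]; simp
      have hinj : Function.Injective f := by
        intro a b hab
        have hcard : (univ.filter fun i => f i = f a).card = 1 := hall1 (f a)
        have ha : a ∈ univ.filter fun i => f i = f a := by simp
        have hb : b ∈ univ.filter fun i => f i = f a := by simp [hab]
        exact Finset.card_le_one.mp hcard.le a ha b hb |>.symm ▸ rfl
      exact Finite.injective_iff_bijective.mp hinj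
    push_neg at hodd
    obtain ⟨j, hj⟩ := hodd
    rw [if_neg hf]
    apply Finset.prod_eq_zero (mem_univ j)
    rw [sum_sgn16_pow, if_neg hj]

lemma polar16 {E : Type*} [NormedAddCommGroup E] [NormedSpace ℝ E] {r : ℕ}
    (L : ContinuousMultilinearMap ℝ (fun _ : Fin r => E) ℝ)
    (hsym : ∀ (σ : Equiv.Perm (Fin r)) (ξ : Fin r → E), L (fun i => ξ (σ i)) = L ξ)
    (x : Fin r → E) :
    ∑ ε : Fin r → Bool, (∏ i, sgn16 (ε i)) * L (fun _ => ∑ j, sgn16 (ε j) • x j)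
      = ((2 : ℝ) ^ r * r.factorial) * L x := by
  classical
  have expand : ∀ ε : Fin r → Bool,
      (L (fun _ : Fin r => ∑ j, sgn16 (ε j) • x j) : ℝ)
        = ∑ f : Fin r → Fin r, (∏ i, sgn16 (ε (f i))) * L (fun i => x (f i)) := by
    intro ε
    rw [L.map_sum (g := fun _ j => sgn16 (ε j) • x j)]
    refine Finset.sum_congr rfl fun f _ => ?_
    rw [L.map_smul_univ]
    simp [smul_eq_mul]
  have key : ∀ (ε : Fin r → Bool) (f : Fin r → Fin r),
      (∏ i, sgn16 (ε i)) * ∏ i, sgn16 (ε (f i))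
        = ∏ j, sgn16 (ε j) ^ ((univ.filter fun i => f i = j).card + 1) := by
    intro ε f
    have h2 : (∏ i, sgn16 (ε (f i)))
        = ∏ j, sgn16 (ε j) ^ (univ.filter fun i => f i = j).card := by
      rw [← Finset.prod_fiberwise_of_maps_to (g := f)
        (fun i (_ : i ∈ univ) => mem_univ (f i)) (fun i => sgn16 (ε (f i)))]
      refine Finset.prod_congr rfl fun j _ => ?_
      rw [Finset.prod_congr rfl (fun i hi => by
        rw [(Finset.mem_filter.mp hi).2] : ∀ i ∈ univ.filter fun i => f i = j,
          sgn16 (ε (f i)) = sgn16 (ε j))]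
      rw [Finset.prod_const]
    rw [h2, ← Finset.prod_mul_distrib]
    refine Finset.prod_congr rfl fun j _ => ?_
    rw [pow_succ']
  calc ∑ ε : Fin r → Bool, (∏ i, sgn16 (ε i)) * L (fun _ => ∑ j, sgn16 (ε j) • x j)
      = ∑ ε : Fin r → Bool, ∑ f : Fin r → Fin r,
          (∏ j, sgn16 (ε j) ^ ((univ.filter fun i => f i = j).card + 1))
            * L (fun i => x (f i)) := by
        refine Finset.sum_congr rfl fun ε _ => ?_
        rw [expand ε, Finset.mul_sum]
        refine Finset.sum_congr rfl fun f _ => ?_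
        rw [← mul_assoc, key ε f]
    _ = ∑ f : Fin r → Fin r,
          (∑ ε : Fin r → Bool, ∏ j, sgn16 (ε j) ^ ((univ.filter fun i => f i = j).card + 1))
            * L (fun i => x (f i)) := by
        rw [Finset.sum_comm]
        refine Finset.sum_congr rfl fun f _ => ?_
        rw [Finset.sum_mul]
    _ = ∑ f : Fin r → Fin r,
          (∏ j, ∑ b : Bool, sgn16 b ^ ((univ.filter fun i => f i = j).card + 1))
            * L (fun i => x (f i)) := by
        refine Finset.sum_congr rfl fun f _ => ?_
        congr 1
        rw [Finset.prod_univ_sum]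
        rw [Fintype.piFinset_univ]
    _ = ∑ f : Fin r → Fin r,
          (if Function.Bijective f then ((2:ℝ)^r) * L x else 0) := by
        refine Finset.sum_congr rfl fun f _ => ?_
        rw [coeff16 f]
        by_cases hf : Function.Bijective f
        · rw [if_pos hf, if_pos hf]
          congr 1
          exact hsym (Equiv.ofBijective f hf) x
        · rw [if_neg hf, if_neg hf, zero_mul]
    _ = ((univ.filter fun f : Fin r → Fin r => Function.Bijective f).card : ℝ)
          * ((2:ℝ)^r * L x) := by
        rw [Finset.sum_ite, Finset.sum_const, Finset.sum_const_zero, add_zero,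
          nsmul_eq_mul]
    _ = ((2 : ℝ) ^ r * r.factorial) * L x := by
        have hcard : (univ.filter fun f : Fin r → Fin r => Function.Bijective f).card
            = r.factorial := by
          rw [show r.factorial = Fintype.card (Equiv.Perm (Fin r)) by
            rw [Fintype.card_perm, Fintype.card_fin]]
          rw [← Finset.card_univ]
          exact Finset.card_bij' (fun f hf => Equiv.ofBijective f (by simpa using hf))
            (fun σ _ => ⇑σ) (fun f hf => mem_univ _)
            (fun σ _ => Finset.mem_filter.mpr ⟨mem_univ _, σ.bijective⟩) (fun f hf => rfl)
            (fun σ _ => Equiv.ext fun i => rfl)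
        rw [hcard]; ring

/-- For a symmetric continuous `r`-multilinear map `L : E^r → ℝ`, the symmetric norm
`sup{|L(ξ,…,ξ)| : ‖ξ‖ ≤ 1}` and the operator norm `sup{|L(ξ₁,…,ξ_r)| : ‖ξ_i‖ ≤ 1}` satisfy
`‖L‖_sym ≤ ‖L‖ ≤ (r^r/r!) ‖L‖_sym`. -/
theorem stmt16 (E : Type*) [NormedAddCommGroup E] [NormedSpace ℝ E] (r : ℕ) (hr : 1 ≤ r)
    (L : ContinuousMultilinearMap ℝ (fun _ : Fin r => E) ℝ)
    (hsym : ∀ (σ : Equiv.Perm (Fin r)) (ξ : Fin r → E), L (fun i => ξ (σ i)) = L ξ) :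
    sSup {t : ℝ | ∃ ξ : E, ‖ξ‖ ≤ 1 ∧ t = |L (fun _ => ξ)|}
        ≤ sSup {t : ℝ | ∃ ξ : Fin r → E, (∀ i, ‖ξ i‖ ≤ 1) ∧ t = |L ξ|} ∧
    sSup {t : ℝ | ∃ ξ : Fin r → E, (∀ i, ‖ξ i‖ ≤ 1) ∧ t = |L ξ|}
        ≤ ((r : ℝ) ^ r / (Nat.factorial r : ℝ)) *
            sSup {t : ℝ | ∃ ξ : E, ‖ξ‖ ≤ 1 ∧ t = |L (fun _ => ξ)|} := by
  classical
  have hsub : {t : ℝ | ∃ ξ : E, ‖ξ‖ ≤ 1 ∧ t = |L (fun _ => ξ)|}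
      ⊆ {t : ℝ | ∃ ξ : Fin r → E, (∀ i, ‖ξ i‖ ≤ 1) ∧ t = |L ξ|} := by
    rintro t ⟨ξ, h1, h2⟩
    exact ⟨fun _ => ξ, fun _ => h1, h2⟩
  have hbdd_f : BddAbove {t : ℝ | ∃ ξ : Fin r → E, (∀ i, ‖ξ i‖ ≤ 1) ∧ t = |L ξ|} := by
    refine ⟨‖L‖, ?_⟩
    rintro t ⟨ξ, hξ, rfl⟩
    calc |L ξ| = ‖L ξ‖ := (Real.norm_eq_abs _).symm
      _ ≤ ‖L‖ * ∏ i, ‖ξ i‖ := L.le_opNorm ξ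
      _ ≤ ‖L‖ * 1 := by
          refine mul_le_mul_of_nonneg_left ?_ (norm_nonneg L)
          exact Finset.prod_le_one (fun i _ => norm_nonneg _) (fun i _ => hξ i)
      _ = ‖L‖ := mul_one _
  have hbdd_d : BddAbove {t : ℝ | ∃ ξ : E, ‖ξ‖ ≤ 1 ∧ t = |L (fun _ => ξ)|} :=
    hbdd_f.mono hsub
  have hne_d : {t : ℝ | ∃ ξ : E, ‖ξ‖ ≤ 1 ∧ t = |L (fun _ => ξ)|}.Nonempty :=
    ⟨|L (fun _ => (0:E))|, 0, by simp, rfl⟩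
  have hne_f : {t : ℝ | ∃ ξ : Fin r → E, (∀ i, ‖ξ i‖ ≤ 1) ∧ t = |L ξ|}.Nonempty :=
    hne_d.mono hsub
  set M := sSup {t : ℝ | ∃ ξ : E, ‖ξ‖ ≤ 1 ∧ t = |L (fun _ => ξ)|} with hM
  have hdiag : ∀ z : E, ‖z‖ ≤ 1 → |L (fun _ => z)| ≤ M :=
    fun z hz => le_csSup hbdd_d ⟨z, hz, rfl⟩
  have hM0 : 0 ≤ M := le_trans (abs_nonneg _) (hdiag 0 (by simp))
  have hr0 : (0:ℝ) < r := by exact_mod_cast hr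
  constructor
  · exact csSup_le hne_d (fun t ht => le_csSup hbdd_f (hsub ht))
  · refine csSup_le hne_f ?_
    rintro t ⟨ξ, hξ, rfl⟩
    have hterm : ∀ ε : Fin r → Bool,
        |L (fun _ : Fin r => ∑ j, sgn16 (ε j) • ξ j)| ≤ (r:ℝ)^r * M := by
      intro ε
      set y := ∑ j, sgn16 (ε j) • ξ j with hy_def
      have hy : ‖y‖ ≤ r := by
        calc ‖y‖ ≤ ∑ j, ‖sgn16 (ε j) • ξ j‖ := norm_sum_le _ _
          _ ≤ ∑ _j : Fin r, 1 := by
              refine Finset.sum_le_sum fun j _ => ?_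
              rw [norm_smul, Real.norm_eq_abs, abs_sgn16, one_mul]
              exact hξ j
          _ = r := by simp
      set z := (r:ℝ)⁻¹ • y with hz_def
      have hz : ‖z‖ ≤ 1 := by
        rw [hz_def, norm_smul, Real.norm_eq_abs, abs_inv, abs_of_pos hr0,
          inv_mul_le_iff₀ hr0, mul_one]
        exact hy
      have hyz : y = (r:ℝ) • z := (smul_inv_smul₀ (ne_of_gt hr0) y).symm
      calc |L (fun _ => y)| = |L (fun _ => (r:ℝ) • z)| := by rw [hyz]
        _ = (r:ℝ)^r * |L (fun _ => z)| := by
            rw [show (fun _ : Fin r => (r:ℝ) • z)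
              = fun i : Fin r => ((fun _ : Fin r => (r:ℝ)) i) • ((fun _ : Fin r => z) i)
              from rfl, L.map_smul_univ]
            rw [smul_eq_mul, abs_mul, Finset.prod_const, Finset.card_univ,
              Fintype.card_fin, abs_pow, abs_of_pos hr0]
        _ ≤ (r:ℝ)^r * M := by
            refine mul_le_mul_of_nonneg_left (hdiag z hz) (by positivity)
    have hpol := polar16 L hsym ξ
    have hpos : (0:ℝ) < 2^r * r.factorial := by positivity
    have h1 : ((2:ℝ)^r * r.factorial) * |L ξ| ≤ (2:ℝ)^r * ((r:ℝ)^r * M) := by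
      calc ((2:ℝ)^r * r.factorial) * |L ξ|
          = |((2:ℝ)^r * r.factorial) * L ξ| := by rw [abs_mul, abs_of_pos hpos]
        _ = |∑ ε : Fin r → Bool, (∏ i, sgn16 (ε i)) * L (fun _ => ∑ j, sgn16 (ε j) • ξ j)| := by
            rw [hpol]
        _ ≤ ∑ ε : Fin r → Bool, |(∏ i, sgn16 (ε i)) * L (fun _ => ∑ j, sgn16 (ε j) • ξ j)| :=
            Finset.abs_sum_le_sum_abs _ _
        _ = ∑ ε : Fin r → Bool, |L (fun _ => ∑ j, sgn16 (ε j) • ξ j)| := by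
            refine Finset.sum_congr rfl fun ε _ => ?_
            rw [abs_mul, Finset.abs_prod]
            simp [abs_sgn16]
        _ ≤ ∑ _ε : Fin r → Bool, (r:ℝ)^r * M :=
            Finset.sum_le_sum fun ε _ => hterm ε
        _ = (2:ℝ)^r * ((r:ℝ)^r * M) := by
            rw [Finset.sum_const, Finset.card_univ, nsmul_eq_mul]
            congr 1
            rw [Fintype.card_fun, Fintype.card_bool, Fintype.card_fin]
            push_cast
            ring
    have hfac : (0:ℝ) < r.factorial := by exact_mod_cast r.factorial_pos
    have h2 : (r.factorial : ℝ) * |L ξ| ≤ (r:ℝ)^r * M := by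
      have h2r : (0:ℝ) < 2^r := by positivity
      nlinarith [h1]
    rw [div_mul_eq_mul_div, le_div_iff₀ hfac]
    linarith [h2]
end

section
/- Let p ≥ 1 and let r̄, r0 be integers with 0 ≤ r̄ ≤ r0. Let F : ℝ^p → ℝ be a polynomial function of total degree at most r̄. Then for every φ ∈ ℝ^p: Σ_{γ ∈ ℕ₀^p, |γ| ≤ r0} |∂^γ F(φ)|/γ! ≤ (1 + ‖φ‖_∞)^{r̄} · Σ_{γ ∈ ℕ₀^p, |γ| ≤ r0} |∂^γ F(0)|/γ!, where ‖φ‖_∞ = max_{1≤j≤p} |φ_j|. -/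
/-!
Write `F = ∑_β c_β x^β`. Then `∂^α F(φ) / α! = ∑_β c_β (β choose α) φ^(β - α)`
coordinatewise, so `∂^α F(0) / α! = c_α` and the Taylor norm at `0` is `∑_β |c_β|`
(every `β` in the support has `|β| ≤ r̄ ≤ r0`). At `φ`, bound `|φ_i| ≤ ‖φ‖` and sum over `α`
first: by the binomial theorem in each coordinate,
`∑_α ∏_i (β_i choose α_i) ‖φ‖^(β_i - α_i) = (1 + ‖φ‖)^|β| ≤ (1 + ‖φ‖)^r̄`.
-/

open scoped BigOperators

/-- Partial derivative in the `i`-th coordinate direction. -/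
noncomputable def pd1 {n : ℕ} (i : Fin n) (f : (Fin n → ℝ) → ℝ) : (Fin n → ℝ) → ℝ :=
  fun z => fderiv ℝ f z (Pi.single i 1)

/-- Iterated partial derivative in one coordinate direction. -/
noncomputable def pdPow {n : ℕ} (i : Fin n) : ℕ → ((Fin n → ℝ) → ℝ) → (Fin n → ℝ) → ℝ
  | 0, f => f
  | k + 1, f => pd1 i (pdPow i k f)

/-- Multiindex partial derivative `∂^α`. -/
noncomputable def pdMulti {n : ℕ} (α : Fin n → ℕ) (f : (Fin n → ℝ) → ℝ) : (Fin n → ℝ) → ℝ :=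
  (List.finRange n).foldr (fun i g => pdPow i (α i) g) f

/-- Multiindex factorial `α! = α₁! ⋯ αₙ!`. -/
def mfact {n : ℕ} (α : Fin n → ℕ) : ℕ := ∏ i, Nat.factorial (α i)

/-- The truncated Taylor norm `|f|_{T_z} = ∑_{|α| ≤ r0} |∂^α f(z)| / α!`. -/
noncomputable def taylorNorm {n : ℕ} (r0 : ℕ) (f : (Fin n → ℝ) → ℝ) (z : Fin n → ℝ) : ℝ :=
  ∑ α ∈ (Finset.Iic (fun _ : Fin n => r0)).filter (fun α => ∑ i, α i ≤ r0),
    |pdMulti α f z| / ((mfact α : ℕ) : ℝ)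

open MvPolynomial

theorem mfact_pos {n : ℕ} (α : Fin n → ℕ) : 0 < mfact α :=
  Finset.prod_pos fun i _ => Nat.factorial_pos (α i)

theorem hasDerivAt_eval_add_smul_single {n : ℕ} (P : MvPolynomial (Fin n) ℝ) (z : Fin n → ℝ)
    (i : Fin n) :
    HasDerivAt (fun t : ℝ => eval (z + t • Pi.single i 1) P) (eval z (pderiv i P)) 0 := by
  classical
  induction P using MvPolynomial.induction_on with
  | C a => simpa using hasDerivAt_const (0 : ℝ) a
  | add f g hf hg =>
    simp only [map_add]
    exact hf.add hg
  | mul_X f j hf =>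
    have hline : HasDerivAt (fun t : ℝ => z j + t * Pi.single (M := fun _ => ℝ) i 1 j)
        (Pi.single (M := fun _ => ℝ) i 1 j) 0 := by
      simpa using ((hasDerivAt_id (0 : ℝ)).mul_const _).const_add (z j)
    simp only [map_mul, eval_X, Pi.add_apply, Pi.smul_apply, smul_eq_mul]
    refine (hf.fun_mul hline).congr_deriv ?_
    rcases eq_or_ne j i with rfl | hji <;> simp [Derivation.leibniz, pderiv_X, *] <;> ring

theorem pd1_eval {n : ℕ} (i : Fin n) (P : MvPolynomial (Fin n) ℝ) :
    pd1 i (fun x => eval x P) = fun z => eval z (pderiv i P) := by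
  funext z
  have hF : HasFDerivAt (fun x => eval x P) (fderiv ℝ (fun x => eval x P) z) z :=
    (AnalyticOnNhd.eval_mvPolynomial P z trivial).differentiableAt.hasFDerivAt
  have hline : HasDerivAt (fun t : ℝ => z + t • Pi.single i (1 : ℝ)) (Pi.single i 1) 0 := by
    simpa using ((hasDerivAt_id (0 : ℝ)).smul_const (Pi.single i (1 : ℝ))).const_add z
  exact (hF.comp_hasDerivAt_of_eq 0 hline (by simp)).unique
    (hasDerivAt_eval_add_smul_single P z i)

theorem pdPow_eval {n : ℕ} (i : Fin n) (k : ℕ) (P : MvPolynomial (Fin n) ℝ) :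
    pdPow i k (fun x => eval x P) = fun z => eval z (((pderiv i).toLinearMap ^ k) P) := by
  induction k with
  | zero => rfl
  | succ k ih => rw [pdPow, ih, pd1_eval, pow_succ', Module.End.mul_apply]; rfl

noncomputable def pderivMulti {R : Type*} [CommSemiring R] {n : ℕ} (α : Fin n → ℕ) :
    Module.End R (MvPolynomial (Fin n) R) :=
  ((List.finRange n).map fun i => (pderiv i).toLinearMap ^ α i).prod

theorem pdMulti_eval {n : ℕ} (α : Fin n → ℕ) (P : MvPolynomial (Fin n) ℝ) :
    pdMulti α (fun x => eval x P) = fun z => eval z (pderivMulti α P) := by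
  rw [pdMulti, pderivMulti]
  induction List.finRange n with
  | nil => rfl
  | cons i l ih => rw [List.foldr_cons, ih, pdPow_eval, List.map_cons, List.prod_cons]; rfl

section Monomial

variable {R : Type*} [CommSemiring R] {n : ℕ}

theorem pderiv_pow_monomial (i : Fin n) (k : ℕ) (s : Fin n →₀ ℕ) (c : R) :
    ((pderiv i).toLinearMap ^ k) (monomial s c)
      = monomial (s - Finsupp.single i k) (c * (s i).descFactorial k) := by
  induction k with
  | zero => simp
  | succ k ih =>
    rw [pow_succ', Module.End.mul_apply, ih, Derivation.coeFn_coe, pderiv_monomial,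
      tsub_tsub, ← Finsupp.single_add, Finsupp.tsub_apply, Finsupp.single_eq_same,
      Nat.descFactorial_succ, Nat.cast_mul, mul_comm ((s i - k : ℕ) : R), mul_assoc]

theorem list_prod_pderiv_pow_monomial (α : Fin n → ℕ) {l : List (Fin n)} (hl : l.Nodup)
    (s : Fin n →₀ ℕ) (c : R) :
    ((l.map fun i => (pderiv i).toLinearMap ^ α i).prod) (monomial s c)
      = monomial (s - ∑ i ∈ l.toFinset, Finsupp.single i (α i))
          (c * ∏ i ∈ l.toFinset, ((s i).descFactorial (α i) : R)) := by
  classical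
  induction l with
  | nil => simp
  | cons i l ih =>
    obtain ⟨hi, hl⟩ := List.nodup_cons.mp hl
    have hi' : i ∉ l.toFinset := by simpa using hi
    have hsi : (s - ∑ j ∈ l.toFinset, Finsupp.single j (α j)) i = s i := by
      simp [Finsupp.single_apply, hi']
    rw [List.map_cons, List.prod_cons, Module.End.mul_apply, ih hl, pderiv_pow_monomial, hsi,
      List.toFinset_cons, Finset.sum_insert hi', Finset.prod_insert hi', tsub_tsub, add_comm]
    congr 1
    ring

theorem pderivMulti_monomial (α : Fin n → ℕ) (s : Fin n →₀ ℕ) (c : R) :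
    pderivMulti α (monomial s c)
      = monomial (s - Finsupp.equivFunOnFinite.symm α)
          (c * ∏ i, ((s i).descFactorial (α i) : R)) := by
  classical
  have hα : ∑ i, Finsupp.single i (α i) = Finsupp.equivFunOnFinite.symm α := by
    simpa using Finsupp.univ_sum_single (Finsupp.equivFunOnFinite.symm α)
  rw [pderivMulti, list_prod_pderiv_pow_monomial α (List.nodup_finRange n),
    List.toFinset_finRange, hα]

theorem eval_pderivMulti (α : Fin n → ℕ) (P : MvPolynomial (Fin n) R) (φ : Fin n → R) :
    eval φ (pderivMulti α P)
      = mfact α *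
          ∑ β ∈ P.support, coeff β P * ∏ i, ((β i).choose (α i) * φ i ^ (β i - α i)) := by
  conv_lhs => rw [← support_sum_monomial_coeff P]
  rw [map_sum, map_sum, Finset.mul_sum]
  refine Finset.sum_congr rfl fun β _ => ?_
  rw [pderivMulti_monomial, eval_monomial, Finsupp.prod_fintype _ _ (fun i => pow_zero (φ i)),
    mfact, Nat.cast_prod]
  simp only [Finsupp.tsub_apply, Finsupp.equivFunOnFinite_symm_apply_apply,
    Nat.descFactorial_eq_factorial_mul_choose, Nat.cast_mul, Finset.prod_mul_distrib]
  ring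

end Monomial

theorem prod_choose_mul_zero_pow {R : Type*} [CommSemiring R] {ι : Type*} [Fintype ι]
    (b a : ι → ℕ) :
    ∏ i, ((b i).choose (a i) * (0 : R) ^ (b i - a i)) = if b = a then 1 else 0 := by
  split_ifs with h
  · simp [h]
  · obtain ⟨i, hi⟩ := Function.ne_iff.mp h
    refine Finset.prod_eq_zero (Finset.mem_univ i) ?_
    rcases hi.lt_or_gt with hlt | hgt
    · simp [Nat.choose_eq_zero_of_lt hlt]
    · simp [zero_pow (Nat.sub_ne_zero_of_lt hgt)]

theorem eval_zero_pderivMulti {R : Type*} [CommSemiring R] {n : ℕ} (α : Fin n → ℕ)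
    (P : MvPolynomial (Fin n) R) :
    eval 0 (pderivMulti α P) = mfact α * coeff (Finsupp.equivFunOnFinite.symm α) P := by
  classical
  have hβ : ∀ β : Fin n →₀ ℕ, (⇑β = α) ↔ (β = Finsupp.equivFunOnFinite.symm α) :=
    fun β => Finsupp.equivFunOnFinite.eq_symm_apply.symm
  simp only [eval_pderivMulti, Pi.zero_apply, prod_choose_mul_zero_pow, hβ, mul_ite, mul_one,
    mul_zero, Finset.sum_ite_eq', mem_support_iff, ite_not]
  split_ifs with h <;> simp [h]

theorem sum_prod_choose_mul_pow {R : Type*} [CommSemiring R] {ι : Type*} [Fintype ι]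
    [DecidableEq ι] (b : ι → ℕ) (t : R) :
    ∑ a ∈ Finset.Iic b, ∏ i, ((b i).choose (a i) * t ^ (b i - a i)) = (1 + t) ^ ∑ i, b i := by
  have hIic : Finset.Iic b = Fintype.piFinset fun i => Finset.Iic (b i) := by
    ext a; simp [Pi.le_def]
  rw [← Finset.prod_pow_eq_pow_sum, hIic,
    ← Finset.prod_univ_sum (fun i => Finset.Iic (b i)) fun i k => (b i).choose k * t ^ (b i - k)]
  refine Finset.prod_congr rfl fun i _ => ?_
  rw [add_pow, Nat.range_succ_eq_Iic]
  exact Finset.sum_congr rfl fun k _ => by ring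

theorem sum_prod_choose_mul_pow_le {R : Type*} [CommSemiring R] [PartialOrder R]
    [IsOrderedRing R] {ι : Type*} [Fintype ι] [DecidableEq ι] (s : Finset (ι → ℕ))
    (b : ι → ℕ) {t : R} (ht : 0 ≤ t) :
    ∑ a ∈ s, ∏ i, ((b i).choose (a i) * t ^ (b i - a i)) ≤ (1 + t) ^ ∑ i, b i := by
  have hvanish : ∀ a ∈ s ∪ Finset.Iic b, a ∉ Finset.Iic b →
      ∏ i, ((b i).choose (a i) * t ^ (b i - a i)) = 0 := by
    intro a _ ha
    obtain ⟨i, hi⟩ : ∃ i, b i < a i := by simpa [Pi.le_def] using ha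
    exact Finset.prod_eq_zero (Finset.mem_univ i) (by simp [Nat.choose_eq_zero_of_lt hi])
  calc ∑ a ∈ s, ∏ i, ((b i).choose (a i) * t ^ (b i - a i))
      ≤ ∑ a ∈ s ∪ Finset.Iic b, ∏ i, ((b i).choose (a i) * t ^ (b i - a i)) :=
        Finset.sum_le_sum_of_subset_of_nonneg Finset.subset_union_left
          fun _ _ _ => by positivity
    _ = ∑ a ∈ Finset.Iic b, ∏ i, ((b i).choose (a i) * t ^ (b i - a i)) :=
        (Finset.sum_subset Finset.subset_union_right hvanish).symm
    _ = (1 + t) ^ ∑ i, b i := sum_prod_choose_mul_pow b t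

theorem sum_le_totalDegree {R : Type*} [CommSemiring R] {n : ℕ} {P : MvPolynomial (Fin n) R}
    {β : Fin n →₀ ℕ} (hβ : β ∈ P.support) : ∑ i, β i ≤ P.totalDegree := by
  simpa [Finsupp.sum_fintype] using le_totalDegree hβ

theorem abs_eval_pderivMulti_div_le {n : ℕ} (α : Fin n → ℕ) (P : MvPolynomial (Fin n) ℝ)
    (φ : Fin n → ℝ) :
    |eval φ (pderivMulti α P)| / mfact α
      ≤ ∑ β ∈ P.support, |coeff β P| * ∏ i, ((β i).choose (α i) * ‖φ‖ ^ (β i - α i)) := by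
  have hmfact : (0 : ℝ) < mfact α := Nat.cast_pos.mpr (mfact_pos α)
  rw [eval_pderivMulti, abs_mul, abs_of_pos hmfact, mul_div_cancel_left₀ _ hmfact.ne']
  refine (Finset.abs_sum_le_sum_abs _ _).trans (Finset.sum_le_sum fun β _ => ?_)
  rw [abs_mul, Finset.abs_prod]
  gcongr with i
  rw [abs_mul, Nat.abs_cast, abs_pow]
  gcongr
  exact norm_le_pi_norm φ i

theorem taylorNorm_eval_le {n : ℕ} (r0 : ℕ) (P : MvPolynomial (Fin n) ℝ) (φ : Fin n → ℝ) :
    taylorNorm r0 (fun x => eval x P) φ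
      ≤ (1 + ‖φ‖) ^ P.totalDegree * ∑ β ∈ P.support, |coeff β P| := by
  set S := (Finset.Iic (fun _ : Fin n => r0)).filter (fun α => ∑ i, α i ≤ r0)
  calc taylorNorm r0 (fun x => eval x P) φ
      = ∑ α ∈ S, |eval φ (pderivMulti α P)| / mfact α := by
        simp only [taylorNorm, pdMulti_eval]; rfl
    _ ≤ ∑ α ∈ S, ∑ β ∈ P.support,
          |coeff β P| * ∏ i, ((β i).choose (α i) * ‖φ‖ ^ (β i - α i)) :=
        Finset.sum_le_sum fun α _ => abs_eval_pderivMulti_div_le α P φ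
    _ = ∑ β ∈ P.support,
          |coeff β P| * ∑ α ∈ S, ∏ i, ((β i).choose (α i) * ‖φ‖ ^ (β i - α i)) := by
        rw [Finset.sum_comm]; simp only [Finset.mul_sum]
    _ ≤ ∑ β ∈ P.support, |coeff β P| * (1 + ‖φ‖) ^ P.totalDegree := by
        gcongr with β hβ
        calc _ ≤ (1 + ‖φ‖) ^ ∑ i, β i := sum_prod_choose_mul_pow_le S β (norm_nonneg φ)
          _ ≤ (1 + ‖φ‖) ^ P.totalDegree :=
            pow_le_pow_right₀ (by linarith [norm_nonneg φ]) (sum_le_totalDegree hβ)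
    _ = (1 + ‖φ‖) ^ P.totalDegree * ∑ β ∈ P.support, |coeff β P| := by
        rw [Finset.mul_sum]; simp only [mul_comm]

theorem sum_abs_coeff_le_taylorNorm_zero {n r0 : ℕ} {P : MvPolynomial (Fin n) ℝ}
    (hP : P.totalDegree ≤ r0) :
    ∑ β ∈ P.support, |coeff β P| ≤ taylorNorm r0 (fun x => eval x P) 0 := by
  simp only [taylorNorm, pdMulti_eval, eval_zero_pderivMulti, abs_mul, Nat.abs_cast,
    mul_div_cancel_left₀ _ (Nat.cast_pos.mpr (mfact_pos _) : (0 : ℝ) < _).ne']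
  calc ∑ β ∈ P.support, |coeff β P|
      = ∑ α ∈ P.support.map Finsupp.equivFunOnFinite.toEmbedding,
          |coeff (Finsupp.equivFunOnFinite.symm α) P| := by simp [Finset.sum_map]
    _ ≤ _ := by
      refine Finset.sum_le_sum_of_subset_of_nonneg ?_ fun _ _ _ => abs_nonneg _
      intro α hα
      obtain ⟨β, hβ, rfl⟩ := Finset.mem_map.mp hα
      have hdeg : ∑ i, β i ≤ r0 := (sum_le_totalDegree hβ).trans hP
      simp only [Finset.mem_filter, Finset.mem_Iic, Equiv.coe_toEmbedding,
        Finsupp.equivFunOnFinite_apply]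
      exact ⟨fun i => (Finset.single_le_sum (fun j _ => Nat.zero_le (β j))
        (Finset.mem_univ i)).trans hdeg, hdeg⟩

theorem stmt17_general (p r0 rbar : ℕ) (hr : rbar ≤ r0)
    (F : (Fin p → ℝ) → ℝ) (P : MvPolynomial (Fin p) ℝ)
    (hdeg : P.totalDegree ≤ rbar) (hFP : ∀ x, F x = MvPolynomial.eval x P)
    (φ : Fin p → ℝ) :
    taylorNorm r0 F φ ≤ (1 + ‖φ‖) ^ rbar * taylorNorm r0 F 0 := by
  obtain rfl : F = fun x => eval x P := funext hFP
  calc taylorNorm r0 (fun x => eval x P) φ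
      ≤ (1 + ‖φ‖) ^ P.totalDegree * ∑ β ∈ P.support, |coeff β P| :=
        taylorNorm_eval_le r0 P φ
    _ ≤ (1 + ‖φ‖) ^ rbar * taylorNorm r0 (fun x => eval x P) 0 := by
      gcongr
      · linarith [norm_nonneg φ]
      · exact sum_abs_coeff_le_taylorNorm_zero (hdeg.trans hr)

/-- Polynomial estimate: if `F : ℝ^p → ℝ` is a polynomial function of total degree at most `r̄ ≤ r0`,
then `∑_{|γ|≤r0} |∂^γ F(φ)|/γ! ≤ (1 + ‖φ‖_∞)^{r̄} ∑_{|γ|≤r0} |∂^γ F(0)|/γ!`. -/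
theorem stmt17 (p r0 rbar : ℕ) (hp : 1 ≤ p) (hr : rbar ≤ r0)
    (F : (Fin p → ℝ) → ℝ) (P : MvPolynomial (Fin p) ℝ)
    (hdeg : P.totalDegree ≤ rbar) (hFP : ∀ x, F x = MvPolynomial.eval x P)
    (φ : Fin p → ℝ) :
    taylorNorm r0 F φ ≤ (1 + ‖φ‖) ^ rbar * taylorNorm r0 F 0 :=
  stmt17_general p r0 rbar hr F P hdeg hFP φ
end
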